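/- arXiv:1704.09001 — 2 statements merged into one kernel-verified Lean document; each statement's English description precedes it below -/
import Mathlib

section
/- Let α, β, γ, δ ∈ ℂ with Re(α) > 0, Re(β) > 0, Re(γ) > 0, Re(δ) > 0, let a, b ∈ ℂ with Re(a) > 0, Re(b) > 0, and let A ∈ ℂ with Re(A) > 0. Then for every z ∈ ℂ, ∫_0^1 t^{a − 1} (1 − t)^{b − 1} exp(−A/(t(1 − t))) · E_{α,β}^{γ,δ}(z t^{α}) dt = Σ_{n=0}^∞ [ (γ)_n z^n / (Γ(α n + β) (δ)_n) ] · B(a + n α, b; A). -/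
open Complex

/-- The Pochhammer symbol `(γ)_x = Γ(γ + x)/Γ(γ)`. -/
noncomputable def pochG (γ x : ℂ) : ℂ := Complex.Gamma (γ + x) / Complex.Gamma γ

/-- The extended beta function `B(x, y; A)`. -/
noncomputable def extBeta (x y A : ℂ) : ℂ :=
  ∫ t in (0:ℝ)..1, (t : ℂ) ^ (x - 1) * ((1 - t : ℝ) : ℂ) ^ (y - 1) *
    Complex.exp (-A / ((t : ℂ) * ((1 - t : ℝ) : ℂ)))

/-- Salim's generalized Mittag-Leffler function `E_{α,β}^{γ,δ}(z)`. -/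
noncomputable def salimML (α β γ δ z : ℂ) : ℂ :=
  ∑' n : ℕ, pochG γ n * z ^ n / (Complex.Gamma (α * n + β) * pochG δ n)

/-! Write `c n = (γ)_n z^n / (Γ(αn+β) (δ)_n)` and expand the Mittag-Leffler function into its
power series: the `n`-th term integrates to `c n * B(a + nα, b; A)`. Since `|exp (-A/(t(1-t)))| ≤ 1`
and `|t^(nα)| ≤ 1` on `(0,1)`, every term is dominated by `|c n| t^(Re a - 1) (1-t)^(Re b - 1)`, so
sum and integral may be exchanged once `∑ |c n| < ∞`. That follows from the ratio test:
`c (n+1) / c n = z (γ+n)/(δ+n) · Γ(αn+β)/Γ(αn+β+α)`, and `Γ(s)/Γ(s+α) = B(s, α)/Γ(α)` is bounded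
by the real beta integral `∫ t^(Re s - 1) (1-t)^(Re α - 1)`, which tends to `0` as `Re s → ∞`. -/

open MeasureTheory Set Filter Topology

namespace Complex

lemma norm_betaIntegrand {u v : ℂ} {t : ℝ} (ht : t ∈ Ioo (0:ℝ) 1) :
    ‖(t : ℂ) ^ (u - 1) * (1 - (t : ℂ)) ^ (v - 1)‖ = t ^ (u.re - 1) * (1 - t) ^ (v.re - 1) := by
  rw [norm_mul, norm_cpow_eq_rpow_re_of_pos ht.1, ← ofReal_one, ← ofReal_sub,
    norm_cpow_eq_rpow_re_of_pos (sub_pos.mpr ht.2)]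
  simp

lemma norm_betaIntegral_le (u v : ℂ) :
    ‖betaIntegral u v‖ ≤ ∫ t in Ioo (0:ℝ) 1, t ^ (u.re - 1) * (1 - t) ^ (v.re - 1) := by
  rw [betaIntegral, intervalIntegral.integral_of_le zero_le_one, integral_Ioc_eq_integral_Ioo]
  exact (norm_integral_le_integral_norm _).trans_eq
    (setIntegral_congr_fun measurableSet_Ioo fun t ht => norm_betaIntegrand ht)

end Complex

lemma integrableOn_rpow_mul_one_sub_rpow {u v : ℝ} (hu : 0 < u) (hv : 0 < v) :
    IntegrableOn (fun t : ℝ => t ^ (u - 1) * (1 - t) ^ (v - 1)) (Ioo 0 1) := by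
  have h := Complex.betaIntegral_convergent (u := u) (v := v) (by simpa) (by simpa)
  rw [intervalIntegrable_iff_integrableOn_Ioo_of_le zero_le_one] at h
  refine IntegrableOn.congr_fun h.norm (fun t ht => ?_) measurableSet_Ioo
  simpa using Complex.norm_betaIntegrand (u := u) (v := v) ht

lemma tendsto_integral_rpow_mul_one_sub_rpow_atTop {v : ℝ} (hv : 0 < v) :
    Tendsto (fun x : ℝ => ∫ t in Ioo (0:ℝ) 1, t ^ (x - 1) * (1 - t) ^ (v - 1)) atTop (𝓝 0) := by
  have hdom : IntegrableOn (fun t : ℝ => (1 - t) ^ (v - 1)) (Ioo 0 1) := by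
    simpa using integrableOn_rpow_mul_one_sub_rpow one_pos hv
  have hbound : ∀ᶠ x : ℝ in atTop, ∀ᵐ t ∂volume.restrict (Ioo (0:ℝ) 1),
      ‖t ^ (x - 1) * (1 - t) ^ (v - 1)‖ ≤ (1 - t) ^ (v - 1) := by
    filter_upwards [eventually_ge_atTop 1] with x hx
    filter_upwards [ae_restrict_mem measurableSet_Ioo] with t ⟨ht0, ht1⟩
    have h1t := sub_pos.mpr ht1
    rw [Real.norm_of_nonneg (by positivity)]
    exact mul_le_of_le_one_left (by positivity)
      (Real.rpow_le_one ht0.le ht1.le (sub_nonneg.mpr hx : 0 ≤ x - 1))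
  have hlim : ∀ᵐ t ∂volume.restrict (Ioo (0:ℝ) 1),
      Tendsto (fun x : ℝ => t ^ (x - 1) * (1 - t) ^ (v - 1)) atTop (𝓝 0) := by
    filter_upwards [ae_restrict_mem measurableSet_Ioo] with t ⟨ht0, ht1⟩
    simpa [sub_eq_add_neg] using ((tendsto_rpow_atTop_of_base_lt_one t (by linarith) ht1).comp
      (tendsto_atTop_add_const_right _ (-1) tendsto_id)).mul_const ((1 - t) ^ (v - 1))
  simpa using tendsto_integral_filter_of_dominated_convergence _
    (Eventually.of_forall fun x => by fun_prop) hbound hdom hlim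

lemma Complex.tendsto_Gamma_div_Gamma_add {u : ℂ} (hu : 0 < u.re) :
    Tendsto (fun s => Gamma s / Gamma (s + u)) (comap re atTop) (𝓝 0) := by
  have hbound : Tendsto (fun s : ℂ => (∫ t in Ioo (0:ℝ) 1,
      t ^ (s.re - 1) * (1 - t) ^ (u.re - 1)) / ‖Gamma u‖) (comap re atTop) (𝓝 0) := by
    simpa using ((tendsto_integral_rpow_mul_one_sub_rpow_atTop hu).comp
      tendsto_comap).div_const ‖Gamma u‖
  refine squeeze_zero_norm' ?_ hbound
  filter_upwards [tendsto_comap.eventually (eventually_gt_atTop 0)] with s hs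
  rw [← mul_div_cancel_right₀ (Gamma s) (Gamma_ne_zero_of_re_pos hu), div_right_comm,
    ← betaIntegral_eq_Gamma_mul_div s u hs hu, norm_div]
  exact div_le_div_of_nonneg_right (norm_betaIntegral_le s u) (norm_nonneg _)

lemma summable_norm_of_succ_eq_mul_of_tendsto_zero {R : Type*} [SeminormedRing R] {f r : ℕ → R}
    (hf : ∀ n, f (n + 1) = f n * r n) (hr : Tendsto r atTop (𝓝 0)) :
    Summable fun n => ‖f n‖ := by
  refine summable_of_ratio_norm_eventually_le (r := 1 / 2) (by norm_num) ?_
  filter_upwards [hr.norm.eventually (gt_mem_nhds (by norm_num : ‖(0 : R)‖ < 1 / 2))] with n hn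
  rw [norm_norm, norm_norm, hf, mul_comm (1 / 2 : ℝ)]
  exact (norm_mul_le _ _).trans (mul_le_mul_of_nonneg_left hn.le (norm_nonneg _))

lemma pochG_natCast_succ {γ : ℂ} {n : ℕ} (h : γ + n ≠ 0) :
    pochG γ ↑(n + 1) = pochG γ n * (γ + n) := by
  rw [pochG, pochG, Nat.cast_succ, ← add_assoc, Gamma_add_one _ h]
  ring

noncomputable def salimTerm (α β γ δ z : ℂ) (n : ℕ) : ℂ :=
  pochG γ n * z ^ n / (Gamma (α * n + β) * pochG δ n)

section salimTerm

variable {α β γ δ : ℂ}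

lemma salimTerm_succ (hα : 0 < α.re) (hβ : 0 < β.re) (hγ : 0 < γ.re) (hδ : 0 < δ.re)
    (z : ℂ) (n : ℕ) :
    salimTerm α β γ δ z (n + 1) = salimTerm α β γ δ z n *
      (z * ((γ + n) / (δ + n)) * (Gamma (α * n + β) / Gamma (α * n + β + α))) := by
  have hpos : ∀ {s : ℂ}, 0 < s.re → 0 < (s + n).re := fun hs => by
    simp only [add_re, natCast_re]; positivity
  have hs : 0 < (α * n + β).re := by
    simp only [add_re, mul_re, natCast_re, natCast_im, mul_zero, sub_zero]; positivity
  have hγn : γ + n ≠ 0 := ne_zero_of_re_pos (hpos hγ)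
  have hδn : δ + n ≠ 0 := ne_zero_of_re_pos (hpos hδ)
  have hΓs := Gamma_ne_zero_of_re_pos hs
  have hΓsα := Gamma_ne_zero_of_re_pos (by rw [add_re]; exact add_pos hs hα)
  have hpochδ : pochG δ n ≠ 0 :=
    div_ne_zero (Gamma_ne_zero_of_re_pos (hpos hδ)) (Gamma_ne_zero_of_re_pos hδ)
  have hstep : α * ↑(n + 1) + β = α * n + β + α := by push_cast; ring
  rw [salimTerm, salimTerm, pochG_natCast_succ hγn, pochG_natCast_succ hδn, hstep, pow_succ]
  rw [mul_comm α] at hΓs hΓsα ⊢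
  field_simp

lemma summable_norm_salimTerm (hα : 0 < α.re) (hβ : 0 < β.re) (hγ : 0 < γ.re) (hδ : 0 < δ.re)
    (z : ℂ) : Summable fun n => ‖salimTerm α β γ δ z n‖ := by
  refine summable_norm_of_succ_eq_mul_of_tendsto_zero (salimTerm_succ hα hβ hγ hδ z) ?_
  have hpoch : Tendsto (fun n : ℕ => (γ + n) / (δ + n)) atTop (𝓝 1) := by
    simpa using tendsto_add_mul_div_add_mul_atTop_nhds γ δ 1 one_ne_zero
  have hre : Tendsto (fun n : ℕ => α * n + β) atTop (comap re atTop) := by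
    refine tendsto_comap_iff.mpr ?_
    simpa [Function.comp_def] using
      tendsto_atTop_add_const_right _ β.re (tendsto_natCast_atTop_atTop.const_mul_atTop hα)
  simpa using (tendsto_const_nhds (x := z)).mul hpoch |>.mul
    ((tendsto_Gamma_div_Gamma_add hα).comp hre)

end salimTerm

lemma integral_tsum_mul_of_norm_le {X : Type*} [MeasurableSpace X] {μ : Measure X} {c : ℕ → ℂ}
    {f : ℕ → X → ℂ} {g : X → ℝ} (hc : Summable fun n => ‖c n‖) (hf : ∀ n, Integrable (f n) μ)
    (hg : Integrable g μ) (hfg : ∀ n, ∀ᵐ x ∂μ, ‖f n x‖ ≤ g x) :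
    ∫ x, ∑' n, c n * f n x ∂μ = ∑' n, c n * ∫ x, f n x ∂μ := by
  have hsum : Summable fun n => ∫ x, ‖c n * f n x‖ ∂μ := by
    refine (hc.mul_right (∫ x, g x ∂μ)).of_nonneg_of_le
      (fun n => integral_nonneg fun _ => norm_nonneg _) fun n => ?_
    simp only [norm_mul, integral_const_mul]
    exact mul_le_mul_of_nonneg_left (integral_mono_ae (hf n).norm hg (hfg n)) (norm_nonneg _)
  rw [← integral_tsum_of_summable_integral_norm (fun n => (hf n).const_mul (c n)) hsum]
  simp only [integral_const_mul]

lemma norm_exp_neg_div_ofReal_le_one {A : ℂ} (hA : 0 ≤ A.re) {s : ℝ} (hs : 0 ≤ s) :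
    ‖exp (-A / s)‖ ≤ 1 := by
  rw [norm_exp, Real.exp_le_one_iff, div_ofReal_re, neg_re]
  exact div_nonpos_of_nonpos_of_nonneg (neg_nonpos.mpr hA) hs

noncomputable def extBetaIntegrand (x y A : ℂ) (t : ℝ) : ℂ :=
  (t : ℂ) ^ (x - 1) * ((1 - t : ℝ) : ℂ) ^ (y - 1) * exp (-A / ((t : ℂ) * ((1 - t : ℝ) : ℂ)))

lemma extBeta_eq_integral_Ioo (x y A : ℂ) :
    extBeta x y A = ∫ t in Ioo (0:ℝ) 1, extBetaIntegrand x y A t := by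
  rw [extBeta, intervalIntegral.integral_of_le zero_le_one, integral_Ioc_eq_integral_Ioo]
  rfl

section extBetaIntegrand

variable {x y A : ℂ}

lemma norm_extBetaIntegrand_le (hA : 0 ≤ A.re) {p : ℝ} (hp : p ≤ x.re) {t : ℝ}
    (ht : t ∈ Ioo (0:ℝ) 1) :
    ‖extBetaIntegrand x y A t‖ ≤ t ^ (p - 1) * (1 - t) ^ (y.re - 1) := by
  have h1t : 0 ≤ 1 - t := sub_nonneg.mpr ht.2.le
  have hexp := norm_exp_neg_div_ofReal_le_one hA (mul_nonneg ht.1.le h1t)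
  rw [extBetaIntegrand, norm_mul, ← ofReal_mul, ofReal_sub, ofReal_one, norm_betaIntegrand ht]
  calc t ^ (x.re - 1) * (1 - t) ^ (y.re - 1) * ‖exp (-A / ↑(t * (1 - t)))‖
      ≤ t ^ (x.re - 1) * (1 - t) ^ (y.re - 1) := mul_le_of_le_one_right
        (mul_nonneg (Real.rpow_nonneg ht.1.le _) (Real.rpow_nonneg h1t _)) hexp
    _ ≤ t ^ (p - 1) * (1 - t) ^ (y.re - 1) := mul_le_mul_of_nonneg_right
        (Real.rpow_le_rpow_of_exponent_ge ht.1 ht.2.le (by linarith)) (Real.rpow_nonneg h1t _)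

lemma integrableOn_extBetaIntegrand (hx : 0 < x.re) (hy : 0 < y.re) (hA : 0 ≤ A.re) :
    IntegrableOn (extBetaIntegrand x y A) (Ioo 0 1) := by
  refine (integrableOn_rpow_mul_one_sub_rpow hx hy).mono'
    (by unfold extBetaIntegrand; fun_prop) ?_
  filter_upwards [ae_restrict_mem measurableSet_Ioo] with t ht
  exact norm_extBetaIntegrand_le hA le_rfl ht

lemma extBetaIntegrand_mul_salimML (α β γ δ z : ℂ) {t : ℝ} (ht : t ≠ 0) :
    extBetaIntegrand x y A t * salimML α β γ δ (z * (t : ℂ) ^ α) =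
      ∑' n : ℕ, salimTerm α β γ δ z n * extBetaIntegrand (x + n * α) y A t := by
  rw [salimML, ← tsum_mul_left]
  refine tsum_congr fun n => ?_
  rw [extBetaIntegrand, extBetaIntegrand, salimTerm, mul_pow, ← cpow_nat_mul,
    add_sub_right_comm, cpow_add _ _ (ofReal_ne_zero.mpr ht)]
  ring

end extBetaIntegrand

/-- Euler type integral of Salim's generalized Mittag-Leffler function. -/
theorem euler_integral_salimML
    (α β γ δ : ℂ) (hα : 0 < α.re) (hβ : 0 < β.re) (hγ : 0 < γ.re) (hδ : 0 < δ.re)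
    (a b : ℂ) (ha : 0 < a.re) (hb : 0 < b.re)
    (A : ℂ) (hA : 0 < A.re) (z : ℂ) :
    (∫ t in (0:ℝ)..1, (t : ℂ) ^ (a - 1) * ((1 - t : ℝ) : ℂ) ^ (b - 1) *
        Complex.exp (-A / ((t : ℂ) * ((1 - t : ℝ) : ℂ))) *
        salimML α β γ δ (z * (t : ℂ) ^ α)) =
      ∑' n : ℕ, pochG γ n * z ^ n / (Complex.Gamma (α * n + β) * pochG δ n) *
        extBeta (a + n * α) b A := by
  have hre : ∀ n : ℕ, a.re ≤ (a + n * α).re := fun n => by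
    simp only [add_re, mul_re, natCast_re, natCast_im, zero_mul, sub_zero,
      le_add_iff_nonneg_right]
    positivity
  simp only [extBeta_eq_integral_Ioo]
  calc _ = ∫ t in Ioo (0:ℝ) 1, extBetaIntegrand a b A t * salimML α β γ δ (z * (t : ℂ) ^ α) := by
        rw [intervalIntegral.integral_of_le zero_le_one, integral_Ioc_eq_integral_Ioo]
        rfl
    _ = ∫ t in Ioo (0:ℝ) 1,
          ∑' n : ℕ, salimTerm α β γ δ z n * extBetaIntegrand (a + n * α) b A t :=
        setIntegral_congr_fun measurableSet_Ioo fun t ht =>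
          extBetaIntegrand_mul_salimML α β γ δ z ht.1.ne'
    _ = _ := integral_tsum_mul_of_norm_le (summable_norm_salimTerm hα hβ hγ hδ z)
        (fun n => integrableOn_extBetaIntegrand (ha.trans_le (hre n)) hb hA.le)
        (integrableOn_rpow_mul_one_sub_rpow ha hb) fun n =>
          (ae_restrict_mem measurableSet_Ioo).mono fun t ht =>
            norm_extBetaIntegrand_le hA.le (hre n) ht
end

section
/- Let α, β, γ, ρ ∈ ℂ with Re(α) > 0, Re(β) > 0, Re(γ) > 0, Re(ρ) > 0, let q > 0 with q < Re(α) + 1, and let t < x be real numbers. Then for every z ∈ ℂ, (1/Γ(ρ)) ∫_t^x (x − s)^{ρ − 1} (s − t)^{β − 1} E_{α,β}^{γ,q}(z (s − t)^{α}) ds = Σ_{n=0}^∞ (x − t)^{ρ + β + n α − 1} (γ)_{qn} z^n / ( n! Γ(ρ + β + α n) ). -/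
/-!
Expanding `E_{α,β}^{γ,q}(z (s - t)^α)` in its power series and integrating term by term, every
term becomes a Beta integral over `[t, x]`, and `B(u, ρ) = Γ(u) Γ(ρ) / Γ(u + ρ)` produces the
coefficients on the right-hand side.

Term-by-term integration needs `∑ ‖c n‖ rⁿ < ∞` for every `r`, where `c n` are the Taylor
coefficients. Euler's integral gives `‖Γ(γ + qn)‖ ≤ Γ(Re γ + qn)`, and Euler's limit formula gives
`Γ(Re s) ≤ ‖Γ(s)‖ exp((Im s)² / (2 (Re s - 1)))`, which for `s = αn + β` loses only a geometric
factor. The resulting real series converges by the ratio test: log-convexity of `Γ` makes the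
ratio of consecutive terms `O(n ^ (q - Re α - 1))`.
-/

open Complex

/-- The extended beta function `B(x, y; A; m)`. -/
noncomputable def extBetaM (x y A : ℂ) (m : ℝ) : ℂ :=
  ∫ t in (0:ℝ)..1, (t : ℂ) ^ (x - 1) * ((1 - t : ℝ) : ℂ) ^ (y - 1) *
    Complex.exp (-A / ((t : ℂ) ^ (m : ℂ) * ((1 - t : ℝ) : ℂ) ^ (m : ℂ)))

/-- The Shukla–Prajapati generalized Mittag-Leffler function `E_{α,β}^{γ,q}(z)`. -/
noncomputable def spML (α β γ : ℂ) (q : ℝ) (z : ℂ) : ℂ :=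
  ∑' n : ℕ, pochG γ ((q * n : ℝ) : ℂ) * z ^ n /
    (Complex.Gamma (α * n + β) * (n.factorial : ℂ))

open Filter Topology MeasureTheory Set Finset
open scoped Nat

theorem sum_range_one_div_add_sq_le {x : ℝ} (hx : 1 < x) (n : ℕ) :
    ∑ j ∈ range n, 1 / (x + j) ^ 2 ≤ 1 / (x - 1) := by
  have hpos (j : ℕ) : 0 < x - 1 + j := by positivity
  calc ∑ j ∈ range n, 1 / (x + j) ^ 2
      ≤ ∑ j ∈ range n, (1 / (x - 1 + j) - 1 / (x - 1 + (j + 1 : ℕ))) := by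
        refine sum_le_sum fun j _ => ?_
        have hj := hpos j
        rw [div_sub_div _ _ hj.ne' (by push_cast; linarith), div_le_div_iff₀ (by positivity)
          (by push_cast; positivity)]
        push_cast
        nlinarith
    _ = 1 / (x - 1) - 1 / (x - 1 + n) := by
        rw [sum_range_sub' (fun j : ℕ => 1 / (x - 1 + j))]
        simp
    _ ≤ 1 / (x - 1) := by
        have hn := hpos n
        simp only [sub_le_self_iff]
        positivity

namespace Real

theorem Gamma_add_le_mul_rpow {u c : ℝ} (hu : 0 < u) (hc : 0 < c) :
    Gamma (u + c) ≤ Gamma u * (u + c) ^ c := by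
  have huc : 0 < u + c := by linarith
  have hslope := convexOn_log_Gamma.slope_mono_adjacent (Set.mem_Ioi.2 hu)
    (Set.mem_Ioi.2 (by linarith : (0 : ℝ) < u + c + 1)) (by linarith : u < u + c) (by linarith)
  simp only [Function.comp_apply, Gamma_add_one huc.ne', add_sub_cancel_left,
    div_one, log_mul huc.ne' (Gamma_pos_of_pos huc).ne'] at hslope
  rw [div_le_iff₀ hc] at hslope
  rw [← log_le_log_iff (Gamma_pos_of_pos huc) (by positivity [Gamma_pos_of_pos hu]),
    log_mul (Gamma_pos_of_pos hu).ne' (by positivity), log_rpow huc]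
  nlinarith

theorem mul_rpow_le_Gamma_add {v c : ℝ} (hv : 1 < v) (hc : 0 < c) :
    Gamma v * (v - 1) ^ c ≤ Gamma (v + c) := by
  have hv0 : 0 < v - 1 := by linarith
  have hslope := convexOn_log_Gamma.slope_mono_adjacent (Set.mem_Ioi.2 hv0)
    (Set.mem_Ioi.2 (by linarith : (0 : ℝ) < v + c)) (by linarith : v - 1 < v) (by linarith)
  have hlog : log (Gamma v) = log (v - 1) + log (Gamma (v - 1)) := by
    rw [← log_mul hv0.ne' (Gamma_pos_of_pos hv0).ne', ← Gamma_add_one hv0.ne', sub_add_cancel]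
  simp only [Function.comp_apply, sub_sub_cancel, div_one, add_sub_cancel_left] at hslope
  rw [le_div_iff₀ hc] at hslope
  rw [← log_le_log_iff (by positivity [Gamma_pos_of_pos (by linarith : 0 < v)])
    (Gamma_pos_of_pos (by linarith)),
    log_mul (Gamma_pos_of_pos (by linarith)).ne' (by positivity), log_rpow hv0]
  nlinarith

theorem tendsto_rpow_div_rpow_mul_succ {a b c q : ℝ} (ha : 0 < a) (hc : 0 ≤ c) (hq : 0 ≤ q)
    (hqa : q < a + 1) :
    Tendsto (fun n : ℕ => (c + q * n + q) ^ q / ((b + a * n - 1) ^ a * (n + 1))) atTop (𝓝 0) := by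
  set K := (c + q) ^ q / (a / 2) ^ a
  have hlim : Tendsto (fun n : ℕ => K * ((n : ℝ) + 1) ^ (-(a + 1 - q))) atTop (𝓝 0) := by
    simpa using ((tendsto_rpow_neg_atTop (by linarith : 0 < a + 1 - q)).comp
      (tendsto_atTop_add_const_right _ 1 tendsto_natCast_atTop_atTop)).const_mul K
  have hlarge : ∀ᶠ n : ℕ in atTop, a / 2 * ((n : ℝ) + 1) ≤ b + a * n - 1 :=
    (tendsto_natCast_atTop_atTop.const_mul_atTop (half_pos ha)).eventually_ge_atTop
      (1 - b + a / 2) |>.mono fun n hn => by linarith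
  refine squeeze_zero' (hlarge.mono fun n hn => ?_) (hlarge.mono fun n hn => ?_) hlim
  · have : 0 < b + a * n - 1 := lt_of_lt_of_le (by positivity) hn
    positivity
  have hn1 : (0 : ℝ) < n + 1 := by positivity
  have hnum : (c + q * n + q) ^ q ≤ (c + q) ^ q * ((n : ℝ) + 1) ^ q := by
    rw [← mul_rpow (by positivity) hn1.le]
    exact rpow_le_rpow (by positivity) (by nlinarith [(Nat.cast_nonneg n : (0 : ℝ) ≤ n)]) hq
  have hden : (a / 2) ^ a * ((n : ℝ) + 1) ^ a ≤ (b + a * n - 1) ^ a := by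
    rw [← mul_rpow (by positivity) hn1.le]
    exact rpow_le_rpow (by positivity) hn ha.le
  calc (c + q * n + q) ^ q / ((b + a * n - 1) ^ a * (n + 1))
      ≤ (c + q) ^ q * ((n : ℝ) + 1) ^ q / ((a / 2) ^ a * ((n : ℝ) + 1) ^ a * (n + 1)) := by
        gcongr
    _ = K * ((n : ℝ) + 1) ^ (-(a + 1 - q)) := by
        rw [rpow_neg hn1.le, rpow_sub hn1, rpow_add hn1, rpow_one]
        simp only [K]
        field_simp

theorem summable_Gamma_mul_pow_div_Gamma_mul_factorial {a b c q : ℝ} (ha : 0 < a) (hb : 0 < b)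
    (hc : 0 < c) (hq : 0 < q) (hqa : q < a + 1) (R : ℝ) :
    Summable fun n : ℕ => Gamma (c + q * n) * R ^ n / (Gamma (b + a * n) * n !) := by
  set f := fun n : ℕ => Gamma (c + q * n) * R ^ n / (Gamma (b + a * n) * n !)
  have hnorm (n : ℕ) : ‖f n‖ = Gamma (c + q * n) * |R| ^ n / (Gamma (b + a * n) * n !) := by
    have hΓc := Gamma_pos_of_pos (by positivity : 0 < c + q * n)
    have hΓb := Gamma_pos_of_pos (by positivity : 0 < b + a * n)
    simp [f, abs_of_pos hΓc, abs_of_pos hΓb]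
  have hratio : ∀ᶠ n : ℕ in atTop, ‖f (n + 1)‖ ≤
      |R| * ((c + q * n + q) ^ q / ((b + a * n - 1) ^ a * (n + 1))) * ‖f n‖ := by
    have hlarge : ∀ᶠ n : ℕ in atTop, 1 < b + a * n :=
      (tendsto_natCast_atTop_atTop.const_mul_atTop ha).eventually_gt_atTop (1 - b) |>.mono
        fun n hn => by linarith
    filter_upwards [hlarge] with n hn
    set u := c + q * n
    set v := b + a * n
    have hu : 0 < u := by positivity
    have hup := Gamma_add_le_mul_rpow hu hq
    have hlow := mul_rpow_le_Gamma_add hn ha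
    have hv : 0 < Gamma v := Gamma_pos_of_pos (by linarith)
    rw [hnorm, hnorm, Nat.factorial_succ, show c + q * ↑(n + 1) = u + q by push_cast; ring,
      show b + a * ↑(n + 1) = v + a by push_cast; ring]
    calc Gamma (u + q) * |R| ^ (n + 1) / (Gamma (v + a) * ↑((n + 1) * n !))
        ≤ Gamma u * (u + q) ^ q * |R| ^ (n + 1) / (Gamma v * (v - 1) ^ a * ((n + 1) * n !)) := by
          push_cast
          gcongr
      _ = _ := by
          simp only [u, v, pow_succ]
          field_simp
  have hsmall := (tendsto_rpow_div_rpow_mul_succ (b := b) ha hc.le hq.le hqa).const_mul |R|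
  rw [mul_zero] at hsmall
  refine summable_of_ratio_norm_eventually_le one_half_lt_one ?_
  filter_upwards [hratio, hsmall.eventually (ge_mem_nhds one_half_pos)] with n h1 h2
  exact h1.trans (mul_le_mul_of_nonneg_right h2 (norm_nonneg _))

end Real

namespace Complex

theorem re_mul_natCast_add (α β : ℂ) (n : ℕ) : (α * n + β).re = α.re * n + β.re := by simp

theorem norm_Gamma_le_Gamma_re {s : ℂ} (hs : 0 < s.re) : ‖Gamma s‖ ≤ Real.Gamma s.re := by
  rw [Gamma_eq_integral hs, Real.Gamma_eq_integral hs, GammaIntegral]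
  refine (norm_integral_le_integral_norm _).trans_eq <|
    setIntegral_congr_fun measurableSet_Ioi fun y hy => ?_
  rw [norm_mul, norm_real, Real.norm_eq_abs, norm_cpow_eq_rpow_re_of_pos hy, sub_re, one_re,
    abs_of_pos (Real.exp_pos _)]

theorem norm_le_re_mul_exp {w : ℂ} (hw : 0 < w.re) :
    ‖w‖ ≤ w.re * Real.exp (w.im ^ 2 / (2 * w.re ^ 2)) := by
  rw [← sq_le_sq₀ (norm_nonneg _) (by positivity)]
  calc ‖w‖ ^ 2 = w.re ^ 2 * (w.im ^ 2 / w.re ^ 2 + 1) := by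
        rw [← sq_norm_sub_sq_re]
        field_simp
        ring
    _ ≤ w.re ^ 2 * Real.exp (w.im ^ 2 / w.re ^ 2) := by
        gcongr
        exact Real.add_one_le_exp _
    _ = (w.re * Real.exp (w.im ^ 2 / (2 * w.re ^ 2))) ^ 2 := by
        rw [mul_pow, ← Real.exp_nat_mul]
        congr 2
        field_simp
        norm_num

theorem prod_norm_add_nat_le {s : ℂ} (hs : 1 < s.re) (n : ℕ) :
    ∏ j ∈ range n, ‖s + j‖ ≤
      (∏ j ∈ range n, (s.re + j)) * Real.exp (s.im ^ 2 / (2 * (s.re - 1))) :=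
  calc ∏ j ∈ range n, ‖s + j‖
      ≤ ∏ j ∈ range n, ((s.re + j) * Real.exp (s.im ^ 2 / (2 * (s.re + j) ^ 2))) :=
        prod_le_prod (fun _ _ => norm_nonneg _) fun j _ => by
          simpa using norm_le_re_mul_exp (w := s + j) (by rw [add_re, natCast_re]; positivity)
    _ = (∏ j ∈ range n, (s.re + j)) *
          Real.exp (s.im ^ 2 / 2 * ∑ j ∈ range n, 1 / (s.re + j) ^ 2) := by
        rw [prod_mul_distrib, ← Real.exp_sum, mul_sum]
        congr 2
        exact sum_congr rfl fun j _ => by field_simp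
    _ ≤ (∏ j ∈ range n, (s.re + j)) * Real.exp (s.im ^ 2 / (2 * (s.re - 1))) := by
        have : 0 < s.re - 1 := by linarith
        refine mul_le_mul_of_nonneg_left (Real.exp_le_exp.2 ?_)
          (prod_nonneg fun j _ => by positivity)
        calc s.im ^ 2 / 2 * ∑ j ∈ range n, 1 / (s.re + j) ^ 2
            ≤ s.im ^ 2 / 2 * (1 / (s.re - 1)) := by gcongr; exact sum_range_one_div_add_sq_le hs n
          _ = _ := by field_simp

theorem Gamma_re_le_norm_Gamma_mul_exp {s : ℂ} (hs : 1 < s.re) :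
    Real.Gamma s.re ≤ ‖Gamma s‖ * Real.exp (s.im ^ 2 / (2 * (s.re - 1))) := by
  set E := Real.exp (s.im ^ 2 / (2 * (s.re - 1)))
  have hseq : ∀ᶠ n : ℕ in atTop, Real.GammaSeq s.re n ≤ ‖GammaSeq s n‖ * E := by
    filter_upwards [eventually_gt_atTop 0] with n hn
    have hprod : 0 < ∏ j ∈ range (n + 1), ‖s + j‖ := prod_pos fun j _ =>
      norm_pos_iff.2 (ne_zero_of_re_pos (by rw [add_re, natCast_re]; positivity))
    rw [Real.GammaSeq, GammaSeq, norm_div, norm_mul, norm_natCast_cpow_of_pos hn, norm_prod,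
      norm_natCast, div_mul_eq_mul_div, div_le_div_iff₀ (prod_pos fun j _ => by positivity) hprod,
      mul_assoc _ E]
    exact mul_le_mul_of_nonneg_left (by linarith [prod_norm_add_nat_le hs (n + 1)]) (by positivity)
  exact le_of_tendsto_of_tendsto (Real.GammaSeq_tendsto_Gamma _)
    ((GammaSeq_tendsto_Gamma s).norm.mul_const E) hseq

theorem exists_Gamma_re_le_norm_Gamma_mul_pow (α β : ℂ) (hα : 0 < α.re) :
    ∃ C D : ℝ, ∀ᶠ n : ℕ in atTop,
      Real.Gamma (β.re + α.re * n) ≤ ‖Gamma (α * n + β)‖ * (C * D ^ n) := by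
  -- Once `Re (αn + β) - 1 ≥ Re α * n / 2 + 1`, the exponent in `Gamma_re_le_norm_Gamma_mul_exp`
  -- is at most `(Im β)² + n * (2 (Im α)² / Re α)`.
  refine ⟨Real.exp (β.im ^ 2), Real.exp (2 * α.im ^ 2 / α.re), ?_⟩
  have hlarge : ∀ᶠ n : ℕ in atTop, |β.re| + 2 ≤ α.re * n / 2 :=
    (tendsto_natCast_atTop_atTop.const_mul_atTop (half_pos hα)).eventually_ge_atTop
      (|β.re| + 2) |>.mono fun n hn => by linarith
  filter_upwards [hlarge] with n hn
  have hre : (α * n + β).re = β.re + α.re * n := by rw [re_mul_natCast_add, add_comm]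
  have him : (α * n + β).im = α.im * n + β.im := by simp
  have hd : α.re * n / 2 + 1 ≤ (α * n + β).re - 1 := by
    rw [hre]; linarith [neg_abs_le β.re]
  have hn0 : 0 ≤ α.re * n := by positivity
  have hexp : (α * n + β).im ^ 2 / (2 * ((α * n + β).re - 1)) ≤
      β.im ^ 2 + n * (2 * α.im ^ 2 / α.re) := by
    rw [div_le_iff₀ (by linarith), him]
    calc (α.im * n + β.im) ^ 2
        ≤ 2 * (α.im * n) ^ 2 + 2 * β.im ^ 2 := by nlinarith [sq_nonneg (α.im * n - β.im)]
      _ = n * (2 * α.im ^ 2 / α.re) * (2 * (α.re * n / 2)) + β.im ^ 2 * (2 * 1) := by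
          field_simp
      _ ≤ n * (2 * α.im ^ 2 / α.re) * (2 * ((α * n + β).re - 1)) +
            β.im ^ 2 * (2 * ((α * n + β).re - 1)) := by
          gcongr <;> linarith
      _ = _ := by ring
  calc Real.Gamma (β.re + α.re * n)
      ≤ ‖Gamma (α * n + β)‖ * Real.exp ((α * n + β).im ^ 2 / (2 * ((α * n + β).re - 1))) := by
        simpa [hre] using Gamma_re_le_norm_Gamma_mul_exp (s := α * n + β) (by linarith)
    _ ≤ ‖Gamma (α * n + β)‖ * (Real.exp (β.im ^ 2) * Real.exp (2 * α.im ^ 2 / α.re) ^ n) := by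
        rw [← Real.exp_nat_mul, ← Real.exp_add]
        gcongr

end Complex

section BetaInterval

variable {t x : ℝ}

theorem intervalIntegrable_sub_cpow_mul_sub_cpow (htx : t < x) {u v : ℂ} (hu : 0 < u.re)
    (hv : 0 < v.re) :
    IntervalIntegrable (fun s : ℝ => ((s - t : ℝ) : ℂ) ^ (u - 1) * ((x - s : ℝ) : ℂ) ^ (v - 1))
      volume t x := by
  obtain ⟨m, htm, hmx⟩ := exists_between htx
  have hpow {w : ℂ} (hw : 0 < w.re) (a b : ℝ) :
      IntervalIntegrable (fun s : ℝ => (s : ℂ) ^ (w - 1)) volume a b :=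
    intervalIntegral.intervalIntegrable_cpow' (by simpa using hw)
  have hcont (w : ℂ) {f : ℝ → ℝ} {S : Set ℝ} (hf : Continuous f) (hpos : ∀ s ∈ S, 0 < f s) :
      ContinuousOn (fun s => ((f s : ℝ) : ℂ) ^ w) S :=
    (continuous_ofReal.comp hf).continuousOn.cpow_const fun s hs =>
      ofReal_mem_slitPlane.2 (hpos s hs)
  refine IntervalIntegrable.trans (b := m) ?_ ?_
  · refine IntervalIntegrable.mul_continuousOn ?_ (hcont _ (by fun_prop) fun s hs => ?_)
    · simpa using (hpow hu 0 (m - t)).comp_sub_right t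
    · rw [Set.uIcc_of_le (by linarith)] at hs
      linarith [hs.2]
  · refine IntervalIntegrable.continuousOn_mul ?_ (hcont _ (by fun_prop) fun s hs => ?_)
    · simpa using (hpow hv (x - m) 0).comp_sub_left x
    · rw [Set.uIcc_of_le (by linarith)] at hs
      linarith [hs.1]

theorem integral_sub_cpow_mul_sub_cpow (htx : t < x) (u v : ℂ) :
    ∫ s in t..x, ((s - t : ℝ) : ℂ) ^ (u - 1) * ((x - s : ℝ) : ℂ) ^ (v - 1) =
      ((x - t : ℝ) : ℂ) ^ (u + v - 1) * betaIntegral u v := by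
  rw [← betaIntegral_scaled u v (sub_pos.2 htx), ← sub_self t,
    ← intervalIntegral.integral_comp_sub_right]
  congr 1 with s
  push_cast
  ring_nf

theorem integral_sub_cpow_mul_tsum_cpow_pow (htx : t < x) {α β ρ : ℂ} (hα : 0 ≤ α.re)
    (hβ : 0 < β.re) (hρ : 0 < ρ.re) {c : ℕ → ℂ}
    (hc : Summable fun n => ‖c n‖ * ((x - t) ^ α.re) ^ n) :
    ∫ s in t..x, ((x - s : ℝ) : ℂ) ^ (ρ - 1) * ((s - t : ℝ) : ℂ) ^ (β - 1) *
        ∑' n, c n * (((s - t : ℝ) : ℂ) ^ α) ^ n =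
      ∑' n, c n * (((x - t : ℝ) : ℂ) ^ (β + α * n + ρ - 1) * betaIntegral (β + α * n) ρ) := by
  set B : ℝ → ℂ := fun s => ((s - t : ℝ) : ℂ) ^ (β - 1) * ((x - s : ℝ) : ℂ) ^ (ρ - 1)
  set F : ℕ → ℝ → ℂ := fun n s => B s * (c n * (((s - t : ℝ) : ℂ) ^ α) ^ n)
  have hre (n : ℕ) : 0 < (β + α * n).re := by rw [add_comm, re_mul_natCast_add]; positivity
  have hF (n : ℕ) : EqOn (F n)
      (fun s => c n * (((s - t : ℝ) : ℂ) ^ (β + α * n - 1) * ((x - s : ℝ) : ℂ) ^ (ρ - 1)))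
      (Ioc t x) := fun s hs => by
    have hst : ((s - t : ℝ) : ℂ) ≠ 0 := ofReal_ne_zero.2 (sub_pos.2 hs.1).ne'
    simp only [F, B]
    rw [← cpow_mul_nat, show β + α * n - 1 = β - 1 + α * n by ring, cpow_add _ _ hst]
    ring
  have hint (n : ℕ) : IntegrableOn (F n) (Ioc t x) :=
    IntegrableOn.congr_fun (((intervalIntegrable_iff_integrableOn_Ioc_of_le htx.le).1
      (intervalIntegrable_sub_cpow_mul_sub_cpow htx (hre n) hρ)).const_mul (c n))
      (hF n).symm measurableSet_Ioc
  have hval (n : ℕ) : ∫ s in Ioc t x, F n s =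
      c n * (((x - t : ℝ) : ℂ) ^ (β + α * n + ρ - 1) * betaIntegral (β + α * n) ρ) := by
    rw [setIntegral_congr_fun measurableSet_Ioc (hF n), integral_const_mul,
      ← intervalIntegral.integral_of_le htx.le, integral_sub_cpow_mul_sub_cpow htx]
  have hB : IntegrableOn B (Ioc t x) :=
    (intervalIntegrable_iff_integrableOn_Ioc_of_le htx.le).1
      (intervalIntegrable_sub_cpow_mul_sub_cpow htx hβ hρ)
  have hnorm (n : ℕ) : ∫ s in Ioc t x, ‖F n s‖ ≤
      (∫ s in Ioc t x, ‖B s‖) * (‖c n‖ * ((x - t) ^ α.re) ^ n) := by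
    rw [← integral_mul_const]
    refine setIntegral_mono_on (hint n).norm (hB.norm.mul_const _) measurableSet_Ioc
      fun s hs => ?_
    have hst : 0 < s - t := sub_pos.2 hs.1
    simp only [F, norm_mul, norm_pow, norm_cpow_eq_rpow_re_of_pos hst]
    gcongr
    linarith [hs.2]
  have hsum : Summable fun n => ∫ s in Ioc t x, ‖F n s‖ :=
    (hc.mul_left _).of_nonneg_of_le (fun n => integral_nonneg fun _ => norm_nonneg _) hnorm
  have hexpand (s : ℝ) : ((x - s : ℝ) : ℂ) ^ (ρ - 1) * ((s - t : ℝ) : ℂ) ^ (β - 1) *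
      ∑' n, c n * (((s - t : ℝ) : ℂ) ^ α) ^ n = ∑' n, F n s := by
    simp only [F, B]
    rw [tsum_mul_left]
    ring
  simp_rw [intervalIntegral.integral_of_le htx.le, hexpand]
  rw [← integral_tsum_of_summable_integral_norm hint hsum]
  exact tsum_congr hval

end BetaInterval

noncomputable def spMLCoeff (α β γ : ℂ) (q : ℝ) (n : ℕ) : ℂ :=
  pochG γ ((q * n : ℝ) : ℂ) / (Gamma (α * n + β) * n !)

theorem spML_eq_tsum (α β γ : ℂ) (q : ℝ) (z : ℂ) :
    spML α β γ q z = ∑' n, spMLCoeff α β γ q n * z ^ n :=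
  tsum_congr fun _ => div_mul_eq_mul_div _ _ _ |>.symm

theorem summable_norm_spMLCoeff_mul_pow {α β γ : ℂ} {q : ℝ} (hα : 0 < α.re) (hβ : 0 < β.re)
    (hγ : 0 < γ.re) (hq : 0 < q) (hqα : q < α.re + 1) (r : ℝ) :
    Summable fun n => ‖spMLCoeff α β γ q n‖ * r ^ n := by
  obtain ⟨C, D, hCD⟩ := exists_Gamma_re_le_norm_Gamma_mul_pow α β hα
  refine ((Real.summable_Gamma_mul_pow_div_Gamma_mul_factorial hα hβ hγ hq hqα
    (|r| * D)).mul_left (C / ‖Gamma γ‖)).of_norm_bounded_eventually ?_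
  rw [Nat.cofinite_eq_atTop]
  filter_upwards [hCD] with n hn
  have hΓ : 0 < ‖Gamma (α * n + β)‖ :=
    norm_pos_iff.2 (Gamma_ne_zero_of_re_pos (by rw [re_mul_natCast_add]; positivity))
  have hΓγ : 0 < ‖Gamma γ‖ := norm_pos_iff.2 (Gamma_ne_zero_of_re_pos hγ)
  have hpoch : ‖Gamma (γ + ((q * n : ℝ) : ℂ))‖ ≤ Real.Gamma (γ.re + q * n) := by
    simpa using norm_Gamma_le_Gamma_re (s := γ + ((q * n : ℝ) : ℂ))
      (by rw [add_re, ofReal_re]; positivity)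
  have hpos : 0 < Real.Gamma (β.re + α.re * n) := Real.Gamma_pos_of_pos (by positivity)
  have hinv : 1 / ‖Gamma (α * n + β)‖ ≤ C * D ^ n / Real.Gamma (β.re + α.re * n) := by
    rw [div_le_div_iff₀ hΓ hpos]
    linarith
  simp only [spMLCoeff, pochG, norm_mul, norm_div, norm_pow, Real.norm_eq_abs, norm_natCast,
    abs_norm, Nat.abs_cast]
  calc ‖Gamma (γ + ((q * n : ℝ) : ℂ))‖ / ‖Gamma γ‖ / (‖Gamma (α * n + β)‖ * n !) * |r| ^ n
      = ‖Gamma (γ + ((q * n : ℝ) : ℂ))‖ * |r| ^ n / (‖Gamma γ‖ * n !) *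
          (1 / ‖Gamma (α * n + β)‖) := by
        field_simp
    _ ≤ Real.Gamma (γ.re + q * n) * |r| ^ n / (‖Gamma γ‖ * n !) *
          (C * D ^ n / Real.Gamma (β.re + α.re * n)) := by
        gcongr
    _ = _ := by
        rw [mul_pow]
        field_simp

/-- Euler type integral over `[t, x]` of the Shukla–Prajapati generalized
Mittag-Leffler function. -/
theorem euler_integral_spML_interval
    (α β γ ρ : ℂ) (hα : 0 < α.re) (hβ : 0 < β.re) (hγ : 0 < γ.re) (hρ : 0 < ρ.re)
    (q : ℝ) (hq : 0 < q) (hqα : q < α.re + 1)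
    (t x : ℝ) (htx : t < x) (z : ℂ) :
    (1 / Complex.Gamma ρ) *
      (∫ s in t..x, ((x - s : ℝ) : ℂ) ^ (ρ - 1) * ((s - t : ℝ) : ℂ) ^ (β - 1) *
        spML α β γ q (z * ((s - t : ℝ) : ℂ) ^ α)) =
      ∑' n : ℕ, ((x - t : ℝ) : ℂ) ^ (ρ + β + n * α - 1) *
        pochG γ ((q * n : ℝ) : ℂ) * z ^ n /
        ((n.factorial : ℂ) * Complex.Gamma (ρ + β + α * n)) := by
  have hc : Summable fun n => ‖spMLCoeff α β γ q n * z ^ n‖ * ((x - t) ^ α.re) ^ n := by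
    simpa [mul_pow, mul_assoc] using
      summable_norm_spMLCoeff_mul_pow hα hβ hγ hq hqα (‖z‖ * (x - t) ^ α.re)
  simp_rw [spML_eq_tsum, mul_pow, ← mul_assoc]
  rw [integral_sub_cpow_mul_tsum_cpow_pow htx hα.le hβ hρ hc, ← tsum_mul_left]
  refine tsum_congr fun n => ?_
  have hre : 0 < (α * n + β).re := by rw [re_mul_natCast_add]; positivity
  rw [add_comm β, betaIntegral_eq_Gamma_mul_div _ _ hre hρ,
    show α * n + β + ρ = ρ + β + α * n by ring, mul_comm (n : ℂ) α]
  have hΓρ := Gamma_ne_zero_of_re_pos hρ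
  have hΓ := Gamma_ne_zero_of_re_pos hre
  simp only [spMLCoeff]
  field_simp
end
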